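/- arXiv:math/0110077 — 2 statements merged into one kernel-verified Lean document; each statement's English description precedes it below -/
import Mathlib

section
/- Let λ be a partition with ℓ(λ) ≤ l and Frobenius coordinates (p₁,…,p_d | q₁,…,q_d). Then in the field ℂ(u) of rational functions in one variable u: ∏_{i=1}^{l} (u+i)/(u+i−λᵢ) = ∏_{(i,j)∈λ} (u−c(i,j)+1)/(u−c(i,j)) = ∏_{i=1}^{d} (u+qᵢ+1)/(u−pᵢ). -/
open Finset

noncomputable section

/-- `μ : ℕ → ℕ` (0-indexed: `μ i` is the `(i+1)`-st part) is a partition. -/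
def IsPartition (μ : ℕ → ℕ) : Prop := Antitone μ ∧ ∃ N, ∀ i, N ≤ i → μ i = 0

/-- number of boxes `|μ|` -/
def psize (μ : ℕ → ℕ) : ℕ := Nat.card {p : ℕ × ℕ // p.2 < μ p.1}

/-- number of nonzero parts `ℓ(μ)` -/
def plen (μ : ℕ → ℕ) : ℕ := Nat.card {i : ℕ // 0 < μ i}

/-- conjugate partition (0-indexed) -/
def conjP (μ : ℕ → ℕ) : ℕ → ℕ := fun j => Nat.card {i : ℕ // j < μ i}

/-- depth `d(μ)`: the number of `i ≥ 1` (1-indexed) with `μᵢ ≥ i` -/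
def depth (μ : ℕ → ℕ) : ℕ := Nat.card {i : ℕ // i < μ i}

/-- containment of Young diagrams -/
def subP (μ ν : ℕ → ℕ) : Prop := ∀ i, μ i ≤ ν i

/-- `dim(μ,ν)`: number of saturated chains `μ = λ⁰ ⊂ λ¹ ⊂ ⋯ ⊂ λᵏ = ν`,
  `k = |ν| - |μ|`, `|λᵗ| = |μ| + t`. -/
def relDim (μ ν : ℕ → ℕ) : ℕ :=
  Nat.card {c : Fin (psize ν - psize μ + 1) → (ℕ → ℕ) //
    c 0 = μ ∧ c (Fin.last _) = ν ∧ (∀ t, IsPartition (c t)) ∧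
    ∀ t : Fin (psize ν - psize μ),
      subP (c t.castSucc) (c t.succ) ∧ psize (c t.succ) = psize (c t.castSucc) + 1}

/-- `dim ν` : number of standard tableaux of shape `ν` -/
def dimP (ν : ℕ → ℕ) : ℕ := relDim (fun _ => 0) ν

/-- the hook partition `(p|q) = (p+1, 1^q)` -/
def hookP (p q : ℕ) : ℕ → ℕ := fun i => if i = 0 then p + 1 else if i ≤ q then 1 else 0

/-- Frobenius coordinate `pᵢ = μᵢ - i` (0-indexed input `i`) -/
def frobP (μ : ℕ → ℕ) (i : ℕ) : ℕ := μ i - (i + 1)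
/-- Frobenius coordinate `qᵢ = μ'ᵢ - i` (0-indexed input `i`) -/
def frobQ (μ : ℕ → ℕ) (i : ℕ) : ℕ := conjP μ i - (i + 1)

/-- the ring of polynomials in `x₁,…,xₙ, y₁,…,yₙ` over `ℂ` -/
abbrev SSRing (n : ℕ) := MvPolynomial (Fin n ⊕ Fin n) ℂ

/-- the power series `1/∏_{i=1}^{k}(1 - cᵢ t)` (inverse computed via `invOfUnit`) -/
def denomInv (R : Type*) [CommRing R] (c : ℕ → R) (k : ℕ) : PowerSeries R :=
  PowerSeries.invOfUnit (∏ i ∈ Finset.range k, (1 - PowerSeries.C (R := R) (c i) * PowerSeries.X)) 1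

/-- the power series `∏_{i=1}^{n} (1 + yᵢ t)/(1 - xᵢ t)` -/
def hGenSeries (n : ℕ) : PowerSeries (SSRing n) :=
  (∏ i : Fin n, (1 + PowerSeries.C (R := SSRing n) (MvPolynomial.X (Sum.inr i)) * PowerSeries.X)) *
    PowerSeries.invOfUnit
      (∏ i : Fin n, (1 - PowerSeries.C (R := SSRing n) (MvPolynomial.X (Sum.inl i)) * PowerSeries.X)) 1

/-- `h` is the family of multiparameter complete homogeneous supersymmetric polynomials:
`h a k = h_{k;a}(x₁,…,xₙ;y₁,…,yₙ)`, characterized by `h_{k;a} = 0` for `k < 0`, `h_{0;a} = 1`, and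
`∏_{i=1}^n (1+yᵢt)/(1-xᵢt) = ∑_{k≥0} h_{k;a} tᵏ/∏_{i=1}^k (1-aᵢt)` (an identity of formal
power series in `t`, stated coefficientwise). -/
def IsH (n : ℕ) (h : (ℤ → ℂ) → ℤ → SSRing n) : Prop :=
  (∀ (a : ℤ → ℂ) (k : ℤ), k < 0 → h a k = 0) ∧ (∀ a, h a 0 = 1) ∧
  ∀ a : ℤ → ℂ, hGenSeries n = PowerSeries.mk (fun N =>
    ∑ k ∈ Finset.range (N + 1),
      h a k * PowerSeries.coeff (R := _) (N - k)
        (denomInv (SSRing n) (fun i => MvPolynomial.C (a ((i : ℤ) + 1))) k))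

/-- shift of a parameter sequence: `(τʳ a)ᵢ = a_{i+r}` -/
def tauSeq (a : ℤ → ℂ) (r : ℤ) : ℤ → ℂ := fun i => a (i + r)

/-- dual sequence `âᵢ = -a_{-i+1}` -/
def adual (a : ℤ → ℂ) : ℤ → ℂ := fun i => -a (1 - i)

/-- the multiparameter Schur polynomial `s_{μ;a} = det[h_{μᵢ-i+j; τ^{1-j}a}]_{1≤i,j≤ℓ(μ)}` -/
def schurDet {n : ℕ} (h : (ℤ → ℂ) → ℤ → SSRing n) (a : ℤ → ℂ) (μ : ℕ → ℕ) : SSRing n :=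
  Matrix.det (Matrix.of fun i j : Fin (plen μ) =>
    h (tauSeq a (-(j : ℕ) : ℤ)) ((μ (i : ℕ) : ℤ) - (i : ℕ) + (j : ℕ)))

/-- the Frobenius-Schur sequence `aᵢ = i - 1/2` -/
def aFS : ℤ → ℂ := fun i => (i : ℂ) - 1/2

/-!
Write the factor of a box of content `c` as `(u - c + 1) / (u - c)`. Along a row, and along a
column, consecutive boxes have contents differing by one, so these factors telescope: row `i` of
length `n` contributes `(u + i + 1) / (u + i + 1 - n)`, which is the first identity. For the
second, every box `(i, j)` lies on exactly one diagonal hook, the one with corner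
`(min i j, min i j)`; the arm and the leg of the hook at `(k, k)` telescope to
`(u + 1) / (u - λₖ + k + 1)` and `(u + λ'ₖ - k) / (u + 1)`, whose product is the `k`-th factor
of the right-hand side.
-/

theorem Nat.lt_card_subtype_iff_of_antitone {P : ℕ → Prop} (hP : Antitone P)
    (hbdd : ∃ N, ¬ P N) (i : ℕ) : i < Nat.card {i // P i} ↔ P i := by
  classical
  have hP_iff : ∀ i, P i ↔ i < Nat.find hbdd := fun i =>
    ⟨fun hi => lt_of_not_ge fun h => Nat.find_spec hbdd (hP h hi),
      fun hi => not_not.1 (Nat.find_min hbdd hi)⟩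
  rw [Nat.card_congr ((Equiv.subtypeEquivRight hP_iff).trans Fin.equivSubtype.symm),
    Nat.card_fin, hP_iff]

section Telescoping

variable {G₀ : Type*} [CommGroupWithZero G₀] {f : ℕ → G₀}

theorem Finset.prod_Ico_div_succ_of_ne_zero (hf : ∀ i, f i ≠ 0) {m n : ℕ} (hmn : m ≤ n) :
    ∏ i ∈ Ico m n, f i / f (i + 1) = f m / f n := by
  induction n, hmn using Nat.le_induction with
  | base => simp [hf m]
  | succ n hmn ih => rw [prod_Ico_succ_top hmn, ih, div_mul_div_cancel₀ (hf n)]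

theorem Finset.prod_Ico_succ_div_of_ne_zero (hf : ∀ i, f i ≠ 0) {m n : ℕ} (hmn : m ≤ n) :
    ∏ i ∈ Ico m n, f (i + 1) / f i = f n / f m := by
  rw [← inv_div, ← prod_Ico_div_succ_of_ne_zero hf hmn, ← prod_inv_distrib]
  simp only [inv_div]

end Telescoping

theorem Finset.prod_range_eq_prod_range_min_mul_prod_Ico {M : Type*} [CommMonoid M]
    (f : ℕ → M) (m n : ℕ) :
    ∏ j ∈ range n, f j = (∏ j ∈ range (min m n), f j) * ∏ j ∈ Ico m n, f j := by
  rcases le_total m n with hmn | hnm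
  · rw [min_eq_left hmn, prod_range_mul_prod_Ico f hmn]
  · rw [min_eq_right hnm, Ico_eq_empty_of_le hnm, prod_empty, mul_one]

namespace IsPartition

variable {μ : ℕ → ℕ}

theorem exists_eq_zero (hμ : IsPartition μ) : ∃ N, μ N = 0 :=
  let ⟨N, hN⟩ := hμ.2
  ⟨N, hN N le_rfl⟩

theorem lt_conjP_iff (hμ : IsPartition μ) (i j : ℕ) : i < conjP μ j ↔ j < μ i :=
  Nat.lt_card_subtype_iff_of_antitone (fun _ _ h hlt => hlt.trans_le (hμ.1 h))
    (let ⟨N, hN⟩ := hμ.exists_eq_zero; ⟨N, by simp [hN]⟩) i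

theorem lt_plen_iff (hμ : IsPartition μ) (i : ℕ) : i < plen μ ↔ 0 < μ i :=
  hμ.lt_conjP_iff i 0

theorem lt_depth_iff (hμ : IsPartition μ) (i : ℕ) : i < depth μ ↔ i < μ i :=
  Nat.lt_card_subtype_iff_of_antitone (fun _ _ h hlt => (h.trans_lt hlt).trans_le (hμ.1 h))
    (let ⟨N, hN⟩ := hμ.exists_eq_zero; ⟨N, by simp [hN]⟩) i

theorem depth_le_plen (hμ : IsPartition μ) : depth μ ≤ plen μ :=
  le_of_forall_lt fun i hi =>
    (hμ.lt_plen_iff i).2 (Nat.zero_lt_of_lt ((hμ.lt_depth_iff i).1 hi))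

end IsPartition

open RatFunc

theorem RatFunc.X_sub_intCast_ne_zero {K : Type*} [Field K] (c : ℤ) :
    (X : RatFunc K) - (c : RatFunc K) ≠ 0 := fun h => by
  have := congrArg intDegree (sub_eq_zero.1 h)
  rw [← map_intCast (C : K →+* RatFunc K), intDegree_X, intDegree_C] at this
  exact one_ne_zero this

def contentFactor (K : Type*) [Field K] (c : ℤ) : RatFunc K :=
  (X - (c : RatFunc K) + 1) / (X - (c : RatFunc K))

section ContentFactor

variable {K : Type*} [Field K]

theorem prod_Ico_contentFactor_sub_right (i a b : ℕ) (hab : a ≤ b) :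
    ∏ j ∈ Ico a b, contentFactor K ((j : ℤ) - i) =
      (X - (a : RatFunc K) + (i : RatFunc K) + 1) /
        (X - (b : RatFunc K) + (i : RatFunc K) + 1) := by
  have h := prod_Ico_div_succ_of_ne_zero
    (fun j => X_sub_intCast_ne_zero (K := K) ((j : ℤ) - i - 1)) hab
  convert h using 1
  · refine prod_congr rfl fun j _ => ?_
    simp only [contentFactor]; push_cast; ring
  · push_cast; ring

theorem prod_Ico_contentFactor_sub_left (j a b : ℕ) (hab : a ≤ b) :
    ∏ i ∈ Ico a b, contentFactor K ((j : ℤ) - i) =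
      (X - (j : RatFunc K) + (b : RatFunc K)) / (X - (j : RatFunc K) + (a : RatFunc K)) := by
  have h := prod_Ico_succ_div_of_ne_zero
    (fun i => X_sub_intCast_ne_zero (K := K) ((j : ℤ) - i)) hab
  convert h using 1
  · refine prod_congr rfl fun i _ => ?_
    simp only [contentFactor]; push_cast; ring
  · push_cast; ring

theorem prod_range_contentFactor_sub (i n : ℕ) :
    ∏ j ∈ range n, contentFactor K ((j : ℤ) - i) =
      (X + (i : RatFunc K) + 1) / (X + (i : RatFunc K) + 1 - (n : RatFunc K)) := by
  rw [range_eq_Ico, prod_Ico_contentFactor_sub_right i 0 n (Nat.zero_le n)]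
  push_cast
  ring_nf

theorem prod_hook_contentFactor {k a b : ℕ} (hka : k ≤ a) (hkb : k < b) :
    (∏ j ∈ Ico k a, contentFactor K ((j : ℤ) - k)) *
        ∏ i ∈ Ico (k + 1) b, contentFactor K ((k : ℤ) - i) =
      (X + (b : RatFunc K) - (k : RatFunc K)) / (X - (a : RatFunc K) + (k : RatFunc K) + 1) := by
  have hX : (X : RatFunc K) + 1 ≠ 0 := by simpa using X_sub_intCast_ne_zero (K := K) (-1)
  rw [prod_Ico_contentFactor_sub_right k k a hka,
    prod_Ico_contentFactor_sub_left k (k + 1) b hkb, mul_comm]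
  push_cast
  rw [show X - (k : RatFunc K) + ((k : RatFunc K) + 1) = X + 1 by ring,
    show X - (k : RatFunc K) + (k : RatFunc K) + 1 = X + 1 by ring, div_mul_div_cancel₀ hX]
  ring

theorem prod_contentFactor_eq_prod_hook {lam : ℕ → ℕ} (hlam : IsPartition lam) {l : ℕ}
    (hl : plen lam ≤ l) :
    ∏ i ∈ range l, ∏ j ∈ range (lam i), contentFactor K ((j : ℤ) - i) =
      ∏ k ∈ range (depth lam), (X + (conjP lam k : RatFunc K) - (k : RatFunc K)) /
        (X - (lam k : RatFunc K) + (k : RatFunc K) + 1) := by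
  set F : ℕ → ℕ → RatFunc K := fun i j => contentFactor K ((j : ℤ) - i)
  have legs : ∏ i ∈ range l, ∏ j ∈ range (min i (lam i)), F i j =
      ∏ k ∈ range (depth lam), ∏ i ∈ Ico (k + 1) (conjP lam k), F i k := by
    refine prod_comm' fun i j => ?_
    have hconj := hlam.lt_conjP_iff i j
    have hdepth := hlam.lt_depth_iff j
    have hplen := hlam.lt_plen_iff i
    have hanti := @hlam.1 j i
    simp only [mem_range, mem_Ico]
    omega
  have arms : ∏ i ∈ range l, ∏ j ∈ Ico i (lam i), F i j =
      ∏ k ∈ range (depth lam), ∏ j ∈ Ico k (lam k), F k j := by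
    refine (prod_subset (range_subset_range.2 (hlam.depth_le_plen.trans hl))
      fun i _ hi => ?_).symm
    rw [Ico_eq_empty_of_le (not_lt.1 (mt (hlam.lt_depth_iff i).2 (by simpa using hi))),
      prod_empty]
  calc ∏ i ∈ range l, ∏ j ∈ range (lam i), F i j
      = ∏ i ∈ range l,
          ((∏ j ∈ range (min i (lam i)), F i j) * ∏ j ∈ Ico i (lam i), F i j) :=
        prod_congr rfl fun i _ => prod_range_eq_prod_range_min_mul_prod_Ico (F i) i (lam i)
    _ = ∏ k ∈ range (depth lam),
          ((∏ j ∈ Ico k (lam k), F k j) * ∏ i ∈ Ico (k + 1) (conjP lam k), F i k) := by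
        rw [prod_mul_distrib, legs, arms, mul_comm, ← prod_mul_distrib]
    _ = _ := prod_congr rfl fun k hk => by
        have hk := (hlam.lt_depth_iff k).1 (mem_range.1 hk)
        exact prod_hook_contentFactor hk.le ((hlam.lt_conjP_iff k k).2 hk)

end ContentFactor

/-- For a partition `λ` with `ℓ(λ) ≤ l` and Frobenius coordinates
`(p₁,…,p_d | q₁,…,q_d)`, in the field `ℂ(u)` of rational functions in one variable `u`:
`∏_{i=1}^{l} (u+i)/(u+i-λᵢ) = ∏_{(i,j)∈λ} (u-c(i,j)+1)/(u-c(i,j)) = ∏_{i=1}^{d} (u+qᵢ+1)/(u-pᵢ)`,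
where `c(i,j) = j - i` is the content of the box `(i,j) ∈ λ`. -/
theorem content_hook_product_identity
    (lam : ℕ → ℕ) (hlam : IsPartition lam) (l : ℕ) (hl : plen lam ≤ l) :
    (∏ i ∈ Finset.range l,
        (RatFunc.X + (i : RatFunc ℂ) + 1) / (RatFunc.X + (i : RatFunc ℂ) + 1 - (lam i : RatFunc ℂ)))
      = (∏ i ∈ Finset.range l, ∏ j ∈ Finset.range (lam i),
          (RatFunc.X - (((j : ℤ) - (i : ℤ) : ℤ) : RatFunc ℂ) + 1) /
            (RatFunc.X - (((j : ℤ) - (i : ℤ) : ℤ) : RatFunc ℂ))) ∧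
    (∏ i ∈ Finset.range l, ∏ j ∈ Finset.range (lam i),
        (RatFunc.X - (((j : ℤ) - (i : ℤ) : ℤ) : RatFunc ℂ) + 1) /
          (RatFunc.X - (((j : ℤ) - (i : ℤ) : ℤ) : RatFunc ℂ)))
      = (∏ i ∈ Finset.range (depth lam),
          (RatFunc.X + (conjP lam i : RatFunc ℂ) - (i : RatFunc ℂ)) /
            (RatFunc.X - (lam i : RatFunc ℂ) + (i : RatFunc ℂ) + 1)) :=
  ⟨prod_congr rfl fun i _ => (prod_range_contentFactor_sub i (lam i)).symm,
    prod_contentFactor_eq_prod_hook hlam hl⟩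

end
end

section
/- For every k ≥ 1, n ≥ 1 and every sequence a = (aᵢ)_{i∈ℤ}, the following branching rule holds: h_{k;a}(x₁,…,xₙ;y₁,…,yₙ) = h_{k;a}(x₁,…,x_{n−1};y₁,…,y_{n−1}) + (xₙ + yₙ) · Σ_{r=0}^{k−1} h_{r;a}(x₁,…,x_{n−1};y₁,…,y_{n−1}) · ∏_{t=1}^{k−1−r}(xₙ − a_{k−t}). -/
open Finset

noncomputable section

/-!
Splitting off the last pair of variables, the generating series in `n` variables is the one in
`n - 1` variables times `(1 + yₙt)/(1 - xₙt) = 1 + (xₙ + yₙ) t/(1 - xₙt)`. Expansions in the basis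
`tᵏ/∏_{i≤k}(1 - aᵢt)` are unique (the basis is triangular), so it suffices to expand
`t^{r+1}/((1 - xₙt)∏_{i≤r}(1 - aᵢt))` in it. This is a telescoping sum, by repeated use of
`1/((1 - xt)∏_{i≤r}(1 - aᵢt)) = 1/∏_{i≤r+1}(1 - aᵢt) + (x - a_{r+1}) t/((1 - xt)∏_{i≤r+1}(1 - aᵢt))`.
-/

namespace PowerSeries

variable {A B : Type*} [CommRing A] [CommRing B]

theorem invOfUnit_one_eq_of_mul_eq_one {φ ψ : A⟦X⟧} (hφ : constantCoeff φ = 1)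
    (h : φ * ψ = 1) : invOfUnit φ 1 = ψ :=
  left_inv_eq_right_inv (invOfUnit_mul φ 1 (by rw [hφ, Units.val_one])) h

theorem mul_invOfUnit_one {φ : A⟦X⟧} (hφ : constantCoeff φ = 1) : φ * invOfUnit φ 1 = 1 :=
  mul_invOfUnit φ 1 (by rw [hφ, Units.val_one])

theorem invOfUnit_mul_eq_mul {φ ψ : A⟦X⟧} (hφ : constantCoeff φ = 1)
    (hψ : constantCoeff ψ = 1) : invOfUnit (φ * ψ) 1 = invOfUnit φ 1 * invOfUnit ψ 1 :=
  invOfUnit_one_eq_of_mul_eq_one (by rw [map_mul, hφ, hψ, one_mul]) <| by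
    rw [mul_mul_mul_comm, mul_invOfUnit_one hφ, mul_invOfUnit_one hψ, one_mul]

theorem map_invOfUnit_one (ρ : A →+* B) {φ : A⟦X⟧} (hφ : constantCoeff φ = 1) :
    map ρ (invOfUnit φ 1) = invOfUnit (map ρ φ) 1 :=
  (invOfUnit_one_eq_of_mul_eq_one
    (by rw [← coeff_zero_eq_constantCoeff_apply, coeff_map, coeff_zero_eq_constantCoeff_apply, hφ,
      map_one])
    (by rw [← map_mul, mul_invOfUnit_one hφ, map_one])).symm

theorem constantCoeff_prod_one_sub_C_mul_X {ι : Type*} (s : Finset ι) (c : ι → A) :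
    constantCoeff (∏ i ∈ s, (1 - C (c i) * X)) = 1 := by
  simp [map_prod]

end PowerSeries

open PowerSeries

section NewtonSeries

variable {A : Type*} [CommRing A] (c : ℕ → A)

theorem prod_mul_denomInv (k : ℕ) : (∏ i ∈ range k, (1 - C (c i) * X)) * denomInv A c k = 1 :=
  mul_invOfUnit_one (constantCoeff_prod_one_sub_C_mul_X _ _)

theorem denomInv_zero : denomInv A c 0 = 1 := by
  rw [denomInv, prod_range_zero]
  exact invOfUnit_one_eq_of_mul_eq_one (map_one _) (mul_one 1)

theorem coeff_zero_denomInv (k : ℕ) : coeff 0 (denomInv A c k) = 1 := by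
  rw [coeff_zero_eq_constantCoeff_apply, denomInv, constantCoeff_invOfUnit]
  simp

theorem denomInv_succ_mul (k : ℕ) :
    denomInv A c (k + 1) * (1 - C (c k) * X) = denomInv A c k :=
  (invOfUnit_one_eq_of_mul_eq_one (constantCoeff_prod_one_sub_C_mul_X _ _) <| by
    rw [← mul_assoc, mul_right_comm, ← prod_range_succ, prod_mul_denomInv]).symm

/-- `∑ₖ bₖ Xᵏ / ∏_{i<k} (1 - cᵢ X)`, defined coefficientwise since the `k`-th term is `O(Xᵏ)`.
With `cᵢ = a_{i+1}` this is the right-hand side of the identity in `IsH`. -/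
def newtonSeries (b : ℕ → A) : A⟦X⟧ :=
  mk fun N => ∑ k ∈ range (N + 1), b k * coeff (N - k) (denomInv A c k)

def newtonPartialSum (b : ℕ → A) (M : ℕ) : A⟦X⟧ :=
  ∑ k ∈ range M, C (b k) * X ^ k * denomInv A c k

theorem coeff_newtonSeries_eq_coeff_newtonPartialSum (b : ℕ → A) {N M : ℕ} (hNM : N < M) :
    coeff N (newtonSeries c b) = coeff N (newtonPartialSum c b M) := by
  have hterm (k : ℕ) : coeff N (C (b k) * X ^ k * denomInv A c k) =
      if k ≤ N then b k * coeff (N - k) (denomInv A c k) else 0 := by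
    rw [mul_assoc, coeff_C_mul, coeff_X_pow_mul']
    split_ifs <;> simp
  rw [newtonSeries, coeff_mk, newtonPartialSum, map_sum]
  simp only [hterm]
  rw [sum_ite, sum_const_zero, add_zero]
  congr 1
  ext k
  simp only [mem_filter, mem_range]
  omega

theorem newtonSeries_injective : Function.Injective (newtonSeries c) := by
  intro b b' hbb'
  funext N
  induction N using Nat.strong_induction_on with
  | _ N ih =>
    have hN := congrArg (coeff N) hbb'
    simp only [newtonSeries, coeff_mk, sum_range_succ, Nat.sub_self, coeff_zero_denomInv,
      mul_one] at hN
    rwa [sum_congr rfl fun k hk => by rw [ih k (mem_range.1 hk)], add_right_inj] at hN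

end NewtonSeries

section Branching

variable {A : Type*} [CommRing A] (c : ℕ → A) (x : A) (b : ℕ → A)

def branchCoeff (K : ℕ) : A :=
  ∑ r ∈ range K, b r * ∏ i ∈ Ico r (K - 1), (x - c i)

theorem branchCoeff_zero : branchCoeff c x b 0 = 0 := sum_range_zero _

theorem branchCoeff_one : branchCoeff c x b 1 = b 0 := by
  simp [branchCoeff]

theorem branchCoeff_add_two (K : ℕ) :
    branchCoeff c x b (K + 2) = b (K + 1) + (x - c K) * branchCoeff c x b (K + 1) := by
  rw [branchCoeff, sum_range_succ, add_comm, branchCoeff, mul_sum]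
  rw [show K + 2 - 1 = K + 1 from rfl, Nat.add_sub_cancel, Ico_self, prod_empty, mul_one]
  refine congrArg _ (sum_congr rfl fun r hr => ?_)
  rw [prod_Ico_succ_top (Nat.lt_succ_iff.1 (mem_range.1 hr))]
  ring

theorem denomInv_mul_invOfUnit (r : ℕ) :
    denomInv A c r * invOfUnit (1 - C x * X) 1 =
      denomInv A c (r + 1) +
        C (x - c r) * X * (denomInv A c (r + 1) * invOfUnit (1 - C x * X) 1) := by
  have hE : (1 - C x * X) * invOfUnit (1 - C x * X) 1 = 1 :=
    mul_invOfUnit_one (by simp)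
  rw [← denomInv_succ_mul c r, map_sub]
  linear_combination denomInv A c (r + 1) * hE

theorem newtonPartialSum_succ (M : ℕ) :
    newtonPartialSum c b (M + 1) = newtonPartialSum c b M + C (b M) * X ^ M * denomInv A c M :=
  sum_range_succ _ _

theorem newtonPartialSum_mul_X_mul_invOfUnit (M : ℕ) :
    newtonPartialSum c b (M + 1) * (X * invOfUnit (1 - C x * X) 1) =
      newtonPartialSum c (branchCoeff c x b) (M + 1) +
        C (branchCoeff c x b (M + 1)) * X ^ (M + 1) *
          (denomInv A c M * invOfUnit (1 - C x * X) 1) := by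
  induction M with
  | zero =>
    simp [newtonPartialSum, denomInv_zero, branchCoeff_zero, branchCoeff_one]
    ring
  | succ M ih =>
    rw [newtonPartialSum_succ, newtonPartialSum_succ c (branchCoeff c x b), branchCoeff_add_two,
      map_add, map_mul]
    linear_combination ih + C (branchCoeff c x b (M + 1)) * X ^ (M + 1) *
      denomInv_mul_invOfUnit c x M

theorem coeff_add_X_pow_mul {f g : A⟦X⟧} {N n : ℕ} (h : N < n) :
    coeff N (f + X ^ n * g) = coeff N f := by
  rw [map_add, coeff_X_pow_mul', if_neg (Nat.not_le.2 h), add_zero]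

theorem newtonSeries_mul_X_mul_invOfUnit :
    newtonSeries c b * (X * invOfUnit (1 - C x * X) 1) = newtonSeries c (branchCoeff c x b) := by
  ext N
  obtain ⟨q, hq⟩ : X ^ (N + 1) ∣ newtonSeries c b - newtonPartialSum c b (N + 1) :=
    X_pow_dvd_iff.2 fun i hi => by
      rw [map_sub, coeff_newtonSeries_eq_coeff_newtonPartialSum c b hi, sub_self]
  set E := invOfUnit (1 - C x * X) 1
  calc coeff N (newtonSeries c b * (X * E))
      = coeff N (newtonPartialSum c b (N + 1) * (X * E) + X ^ (N + 1) * (q * (X * E))) :=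
        congrArg _ (by linear_combination (X * E) * hq)
    _ = coeff N (newtonPartialSum c (branchCoeff c x b) (N + 1) + X ^ (N + 1) *
          (C (branchCoeff c x b (N + 1)) * (denomInv A c N * E) + q * (X * E))) :=
        congrArg _ (by linear_combination newtonPartialSum_mul_X_mul_invOfUnit c x b N)
    _ = coeff N (newtonSeries c (branchCoeff c x b)) := by
        rw [coeff_add_X_pow_mul N.lt_succ_self,
          coeff_newtonSeries_eq_coeff_newtonPartialSum c _ N.lt_succ_self]

theorem newtonSeries_add_mul (b' : ℕ → A) (z : A) :
    newtonSeries c (fun k => b k + z * b' k) = newtonSeries c b + C z * newtonSeries c b' := by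
  ext N
  simp only [newtonSeries, coeff_mk, map_add, coeff_C_mul, mul_sum, ← sum_add_distrib]
  exact sum_congr rfl fun k _ => by ring

theorem newtonSeries_mul_one_add_C_mul_X_mul_invOfUnit (y : A) :
    newtonSeries c b * ((1 + C y * X) * invOfUnit (1 - C x * X) 1) =
      newtonSeries c (fun K => b K + (x + y) * branchCoeff c x b K) := by
  have hE : (1 - C x * X) * invOfUnit (1 - C x * X) 1 = 1 := mul_invOfUnit_one (by simp)
  rw [newtonSeries_add_mul, ← newtonSeries_mul_X_mul_invOfUnit, map_add]
  linear_combination newtonSeries c b * hE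

end Branching

section Map

variable {A B : Type*} [CommRing A] [CommRing B] (ρ : A →+* B) (c : ℕ → A)

theorem map_denomInv (k : ℕ) : map ρ (denomInv A c k) = denomInv B (fun i => ρ (c i)) k := by
  rw [denomInv, map_invOfUnit_one ρ (constantCoeff_prod_one_sub_C_mul_X _ _)]
  simp [denomInv, map_prod]

theorem map_newtonSeries (b : ℕ → A) :
    map ρ (newtonSeries c b) = newtonSeries (fun i => ρ (c i)) (fun k => ρ (b k)) := by
  ext N
  simp [newtonSeries, coeff_map, ← map_denomInv]

end Map

theorem hGenSeries_succ (m : ℕ) :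
    hGenSeries (m + 1) =
      map (MvPolynomial.rename (Sum.map Fin.castSucc Fin.castSucc)).toRingHom (hGenSeries m) *
        ((1 + C (MvPolynomial.X (Sum.inr (Fin.last m))) * X) *
          invOfUnit (1 - C (MvPolynomial.X (Sum.inl (Fin.last m))) * X) 1) := by
  rw [hGenSeries, hGenSeries, map_mul,
    map_invOfUnit_one _ (constantCoeff_prod_one_sub_C_mul_X _ _), Fin.prod_univ_castSucc,
    Fin.prod_univ_castSucc (fun i => 1 - C (MvPolynomial.X (Sum.inl i)) * X),
    invOfUnit_mul_eq_mul (constantCoeff_prod_one_sub_C_mul_X _ _) (by simp)]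
  simp only [map_prod, map_add, map_sub, map_one, map_mul, map_C, map_X]
  simp only [AlgHom.toRingHom_eq_coe, RingHom.coe_coe, MvPolynomial.rename_X, Sum.map_inl,
    Sum.map_inr]
  ring

theorem h_branching_rule_general
    (m : ℕ) (a : ℤ → ℂ) (k : ℕ)
    (h : (ℤ → ℂ) → ℤ → SSRing (m + 1)) (hh : IsH (m + 1) h)
    (h' : (ℤ → ℂ) → ℤ → SSRing m) (hh' : IsH m h') :
    h a (k : ℤ) =
      MvPolynomial.rename (Sum.map Fin.castSucc Fin.castSucc) (h' a (k : ℤ)) +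
        (MvPolynomial.X (Sum.inl (Fin.last m)) + MvPolynomial.X (Sum.inr (Fin.last m))) *
          ∑ r ∈ Finset.range k,
            MvPolynomial.rename (Sum.map Fin.castSucc Fin.castSucc) (h' a (r : ℤ)) *
              ∏ t ∈ Finset.range (k - 1 - r),
                (MvPolynomial.X (Sum.inl (Fin.last m)) -
                  MvPolynomial.C (a ((k : ℤ) - 1 - (t : ℕ)))) := by
  set ρ : SSRing m →+* SSRing (m + 1) :=
    (MvPolynomial.rename (Sum.map Fin.castSucc Fin.castSucc)).toRingHom
  set x : SSRing (m + 1) := MvPolynomial.X (Sum.inl (Fin.last m))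
  set y : SSRing (m + 1) := MvPolynomial.X (Sum.inr (Fin.last m))
  set c : ℕ → SSRing (m + 1) := fun i => MvPolynomial.C (a ((i : ℤ) + 1))
  have hc : (fun i : ℕ => ρ (MvPolynomial.C (a ((i : ℤ) + 1)))) = c := by
    funext i; exact MvPolynomial.rename_C _ _
  have hseries : newtonSeries c (fun K => h a K) =
      newtonSeries c fun K => ρ (h' a K) + (x + y) * branchCoeff c x (fun r => ρ (h' a r)) K := by
    calc newtonSeries c (fun K => h a K)
        = hGenSeries (m + 1) := (hh.2.2 a).symm
      _ = map ρ (hGenSeries m) * ((1 + C y * X) * invOfUnit (1 - C x * X) 1) := hGenSeries_succ m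
      _ = map ρ (newtonSeries (fun i => MvPolynomial.C (a ((i : ℤ) + 1))) (fun K => h' a K)) *
            ((1 + C y * X) * invOfUnit (1 - C x * X) 1) := by
        rw [hh'.2.2 a]; rfl
      _ = _ := by
        rw [map_newtonSeries, hc, newtonSeries_mul_one_add_C_mul_X_mul_invOfUnit]
  rw [congrFun (newtonSeries_injective c hseries) k, branchCoeff]
  refine congrArg _ (congrArg _ (sum_congr rfl fun r _ => congrArg _ ?_))
  rw [prod_Ico_eq_prod_range, ← prod_range_reflect]
  refine prod_congr rfl fun t ht => ?_
  have ht : t < k - 1 - r := mem_range.1 ht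
  simp only [c]
  congr 3
  omega

/-- **branching rule.** For every `k ≥ 1`, `n = m + 1 ≥ 1` and every sequence `a`:
`h_{k;a}(x₁,…,xₙ;y₁,…,yₙ) = h_{k;a}(x₁,…,x_{n-1};y₁,…,y_{n-1})`
`+ (xₙ+yₙ)·∑_{r=0}^{k-1} h_{r;a}(x₁,…,x_{n-1};y₁,…,y_{n-1})·∏_{t=1}^{k-1-r}(xₙ - a_{k-t})`,
where the `(n-1)`-variable polynomials are viewed in the `n`-variable ring via the
inclusion of the first `n-1` variables. -/
theorem h_branching_rule
    (m : ℕ) (a : ℤ → ℂ) (k : ℕ) (hk : 1 ≤ k)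
    (h : (ℤ → ℂ) → ℤ → SSRing (m + 1)) (hh : IsH (m + 1) h)
    (h' : (ℤ → ℂ) → ℤ → SSRing m) (hh' : IsH m h') :
    h a (k : ℤ) =
      MvPolynomial.rename (Sum.map Fin.castSucc Fin.castSucc) (h' a (k : ℤ)) +
        (MvPolynomial.X (Sum.inl (Fin.last m)) + MvPolynomial.X (Sum.inr (Fin.last m))) *
          ∑ r ∈ Finset.range k,
            MvPolynomial.rename (Sum.map Fin.castSucc Fin.castSucc) (h' a (r : ℤ)) *
              ∏ t ∈ Finset.range (k - 1 - r),
                (MvPolynomial.X (Sum.inl (Fin.last m)) -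
                  MvPolynomial.C (a ((k : ℤ) - 1 - (t : ℕ)))) :=
  h_branching_rule_general m a k h hh h' hh'

end
end
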